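/- Let K : ℝ^m × ℝ^m → ℂ be continuous with compact support and let f₁, f₂ : ℝ^m → ℂ be bounded measurable. Set K_sum := K_{f₁} + K_{f₂} and K_diff := K_{f₁} − K_{f₂}, viewed as integrable functions on ℝ^{2m}. Then for all x, y ∈ ℝ^m, F(f₁)(x,y) − F(f₂)(x,y) = (2π)^(−m) · Re( 𝓕_{2m}( conj(K_sum(−·)) ⋆ K_diff )(𝔣x, −𝔣y) ), where ⋆ denotes convolution on ℝ^{2m}, i.e. (a ⋆ b)(z) = ∫_{ℝ^{2m}} a(z − w)·b(w) dw, and conj(K_sum(−·)) denotes the function z ↦ conj(K_sum(−z)). -/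

import Mathlib

open MeasureTheory Complex

noncomputable section

/-- `ℝ^m` with its Euclidean structure. -/
abbrev Em (m : ℕ) := EuclideanSpace ℝ (Fin m)

/-- The chirp function `n_𝔣(x) = exp(i·𝔣·|x|²/2)`. -/
def chirp (m : ℕ) (fr : ℝ) (x : Em m) : ℂ :=
  Complex.exp (Complex.I * fr * (‖x‖ : ℂ) ^ 2 / 2)

/-- The twisted kernel
`K_f(p,q) = 𝔣^m · n_𝔣(p) · e^{f(p)} · K(p,q) · e^{conj(f(q))} · conj(n_𝔣(q))`. -/
def kerF (m : ℕ) (fr : ℝ) (K : Em m → Em m → ℂ) (f : Em m → ℂ) (p q : Em m) : ℂ :=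
  (fr : ℂ) ^ m * chirp m fr p * Complex.exp (f p) * K p q *
    Complex.exp ((starRingEnd ℂ) (f q)) * (starRingEnd ℂ) (chirp m fr q)

/-- The unitary Fourier transform on `ℝ^{2m} = ℝ^m × ℝ^m`,
`𝓕_{2m}(Φ)(ξ,η) = (2π)^{-m} ∫∫ Φ(p,q)·exp(-i(⟨ξ,p⟩+⟨η,q⟩)) dp dq`. -/
def FT2m (m : ℕ) (Φ : Em m → Em m → ℂ) (ξ η : Em m) : ℂ :=
  (((2 * Real.pi) ^ m : ℝ) : ℂ)⁻¹ *
    ∫ p : Em m, ∫ q : Em m,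
      Φ p q * Complex.exp (-Complex.I * ((inner ℝ ξ p : ℝ) + (inner ℝ η q : ℝ)))

/-- The forward map `F(f)(x,y) = |𝓕_{2m}(K_f)(𝔣x, −𝔣y)|²`. -/
def FwdF (m : ℕ) (fr : ℝ) (K : Em m → Em m → ℂ) (f : Em m → ℂ) (x y : Em m) : ℝ :=
  ‖FT2m m (kerF m fr K f) (fr • x) (-(fr • y))‖ ^ 2

/-- Convolution on `ℝ^{2m} = ℝ^m × ℝ^m`:
`(a ⋆ b)(z) = ∫_{ℝ^{2m}} a(z−w)·b(w) dw`. -/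
def conv2m (m : ℕ) (a b : Em m → Em m → ℂ) (z₁ z₂ : Em m) : ℂ :=
  ∫ w₁ : Em m, ∫ w₂ : Em m, a (z₁ - w₁) (z₂ - w₂) * b w₁ w₂

/-! Fix `(ξ, η)` and write `Â := ∫ A(z) e^{-i⟨(ξ,η),z⟩} dz` on `ℝ^m × ℝ^m`. The kernel is a
unitary character, so `Â` turns convolution into multiplication and sends `conj (A (-·))` to
`conj Â`. Hence, with `a, b` the transforms of `K_{f₁}, K_{f₂}`, both sides equal
`(2π)^{-2m} (|a|² - |b|²)`, by `|a|² - |b|² = Re (conj (a + b) (a - b))`. -/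

open scoped ComplexConjugate

theorem MeasureTheory.Measure.isNegInvariant_prod {G H : Type*}
    [MeasurableSpace G] [MeasurableSpace H] [AddGroup G] [AddGroup H]
    [MeasurableNeg G] [MeasurableNeg H] (μ : Measure G) (ν : Measure H)
    [SigmaFinite μ] [SigmaFinite ν] [μ.IsNegInvariant] [ν.IsNegInvariant] :
    (μ.prod ν).IsNegInvariant := by
  constructor
  change Measure.map (Prod.map Neg.neg Neg.neg) (μ.prod ν) = μ.prod ν
  rw [← Measure.map_prod_map _ _ measurable_neg measurable_neg, Measure.map_neg_eq_self,
    Measure.map_neg_eq_self]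

section FourierKernel

variable {G : Type*} [AddCommGroup G]

def fourierKernel (φ : G →+ ℝ) (z : G) : ℂ :=
  cexp (-I * φ z)

variable {φ : G →+ ℝ}

lemma norm_fourierKernel (z : G) : ‖fourierKernel φ z‖ = 1 := by
  simp [fourierKernel, norm_exp]

lemma fourierKernel_sub_mul (z w : G) :
    fourierKernel φ (z - w) * fourierKernel φ w = fourierKernel φ z := by
  simp only [fourierKernel, ← Complex.exp_add, map_sub, ofReal_sub]
  congr 1
  ring

lemma fourierKernel_neg (z : G) : fourierKernel φ (-z) = conj (fourierKernel φ z) := by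
  simp [fourierKernel, ← Complex.exp_conj]

lemma measurable_fourierKernel [MeasurableSpace G] (hφ : Measurable φ) :
    Measurable (fourierKernel φ) := by
  unfold fourierKernel
  fun_prop

variable [MeasurableSpace G] {μ : Measure G} {A B : G → ℂ}

lemma MeasureTheory.Integrable.mul_fourierKernel (hφ : Measurable φ) (hA : Integrable A μ) :
    Integrable (fun z => A z * fourierKernel φ z) μ :=
  hA.mul_bdd (measurable_fourierKernel hφ).aestronglyMeasurable
    (ae_of_all _ fun z => (norm_fourierKernel z).le)

lemma integral_conj_neg_mul_fourierKernel [MeasurableNeg G] [μ.IsNegInvariant] :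
    ∫ z, conj (A (-z)) * fourierKernel φ z ∂μ = conj (∫ z, A z * fourierKernel φ z ∂μ) := by
  rw [← integral_conj, ← integral_neg_eq_self _ μ]
  simp [fourierKernel_neg]

variable [MeasurableAdd₂ G] [MeasurableNeg G] [SFinite μ] [μ.IsAddRightInvariant]

lemma integrable_prod_sub_mul (hA : Integrable A μ) (hB : Integrable B μ) :
    Integrable (fun p : G × G => A (p.1 - p.2) * B p.2) (μ.prod μ) := by
  simpa [mul_comm] using hB.convolution_integrand (ContinuousLinearMap.mul ℂ ℂ) hA

lemma integral_convolution_mul_fourierKernel (hφ : Measurable φ)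
    (hA : Integrable A μ) (hB : Integrable B μ) :
    ∫ z, (∫ w, A (z - w) * B w ∂μ) * fourierKernel φ z ∂μ =
      (∫ z, A z * fourierKernel φ z ∂μ) * ∫ z, B z * fourierKernel φ z ∂μ := by
  set Ae := fun z => A z * fourierKernel φ z
  set Be := fun z => B z * fourierKernel φ z
  have split (z : G) : (∫ w, A (z - w) * B w ∂μ) * fourierKernel φ z =
      ∫ w, Ae (z - w) * Be w ∂μ := by
    rw [← integral_mul_const]
    congr 1 with w
    rw [← fourierKernel_sub_mul z w]
    ring
  simp_rw [split]
  rw [integral_integral_swap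
    (integrable_prod_sub_mul (hA.mul_fourierKernel hφ) (hB.mul_fourierKernel hφ))]
  simp_rw [integral_mul_const, integral_sub_right_eq_self Ae, integral_const_mul]

end FourierKernel

section InnerPairing

variable {E : Type*} [NormedAddCommGroup E] [InnerProductSpace ℝ E]

def innerPairing (ξ η : E) : E × E →+ ℝ :=
  (innerSL ℝ ξ).coprod (innerSL ℝ η)

lemma innerPairing_apply (ξ η : E) (z : E × E) :
    innerPairing ξ η z = inner ℝ ξ z.1 + inner ℝ η z.2 :=
  rfl

lemma measurable_innerPairing [MeasurableSpace E] [OpensMeasurableSpace E] (ξ η : E) :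
    Measurable (innerPairing ξ η) :=
  ((innerSL ℝ ξ).continuous.measurable.comp measurable_fst).add
    ((innerSL ℝ η).continuous.measurable.comp measurable_snd)

end InnerPairing

section FT2m

variable {m : ℕ} {a b : Em m → Em m → ℂ}

instance isNegInvariant_volume_prod_volume :
    ((volume : Measure (Em m)).prod (volume : Measure (Em m))).IsNegInvariant :=
  Measure.isNegInvariant_prod _ _

lemma FT2m_eq_integral {Φ : Em m → Em m → ℂ}
    (hΦ : Integrable (Function.uncurry Φ) (volume.prod volume)) (ξ η : Em m) :
    FT2m m Φ ξ η = (((2 * Real.pi) ^ m : ℝ) : ℂ)⁻¹ *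
      ∫ z, Function.uncurry Φ z * fourierKernel (innerPairing ξ η) z ∂(volume.prod volume) := by
  rw [integral_prod _ (hΦ.mul_fourierKernel (measurable_innerPairing ξ η))]
  simp [FT2m, fourierKernel, innerPairing_apply]

lemma FT2m_add (ha : Integrable (Function.uncurry a) (volume.prod volume))
    (hb : Integrable (Function.uncurry b) (volume.prod volume)) (ξ η : Em m) :
    FT2m m (fun p q => a p q + b p q) ξ η = FT2m m a ξ η + FT2m m b ξ η := by
  rw [FT2m_eq_integral (Φ := fun p q => a p q + b p q) (ha.add hb), FT2m_eq_integral ha,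
    FT2m_eq_integral hb, ← mul_add, ← integral_add (ha.mul_fourierKernel
      (measurable_innerPairing ξ η)) (hb.mul_fourierKernel (measurable_innerPairing ξ η))]
  congr 2 with z
  exact add_mul _ _ _

lemma FT2m_sub (ha : Integrable (Function.uncurry a) (volume.prod volume))
    (hb : Integrable (Function.uncurry b) (volume.prod volume)) (ξ η : Em m) :
    FT2m m (fun p q => a p q - b p q) ξ η = FT2m m a ξ η - FT2m m b ξ η := by
  rw [FT2m_eq_integral (Φ := fun p q => a p q - b p q) (ha.sub hb), FT2m_eq_integral ha,
    FT2m_eq_integral hb, ← mul_sub, ← integral_sub (ha.mul_fourierKernel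
      (measurable_innerPairing ξ η)) (hb.mul_fourierKernel (measurable_innerPairing ξ η))]
  congr 2 with z
  exact sub_mul _ _ _

lemma integrable_conj_neg (ha : Integrable (Function.uncurry a) (volume.prod volume)) :
    Integrable (Function.uncurry fun p q => conj (a (-p) (-q))) (volume.prod volume) :=
  Complex.conjLIE.integrable_comp_iff.2 ha.comp_neg

lemma FT2m_conj_neg (ha : Integrable (Function.uncurry a) (volume.prod volume)) (ξ η : Em m) :
    FT2m m (fun p q => conj (a (-p) (-q))) ξ η = conj (FT2m m a ξ η) := by
  rw [FT2m_eq_integral (integrable_conj_neg ha), FT2m_eq_integral ha, map_mul, map_inv₀,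
    conj_ofReal]
  congr 1
  exact integral_conj_neg_mul_fourierKernel (A := Function.uncurry a)

lemma FT2m_conv2m (ha : Integrable (Function.uncurry a) (volume.prod volume))
    (hb : Integrable (Function.uncurry b) (volume.prod volume)) (ξ η : Em m) :
    FT2m m (conv2m m a b) ξ η = (((2 * Real.pi) ^ m : ℝ) : ℂ) * FT2m m a ξ η * FT2m m b ξ η := by
  have hprod := integrable_prod_sub_mul ha hb
  -- `conv2m` is an iterated integral: Fubini identifies it with the convolution for the product
  -- measure only for a.e. `z`, which suffices under the outer integral.
  have hconv : Function.uncurry (conv2m m a b) =ᵐ[volume.prod volume]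
      fun z => ∫ w, Function.uncurry a (z - w) * Function.uncurry b w ∂(volume.prod volume) := by
    filter_upwards [hprod.prod_right_ae] with z hz
    exact (integral_prod _ hz).symm
  have hconv_mul : ∫ z, Function.uncurry (conv2m m a b) z * fourierKernel (innerPairing ξ η) z
      ∂(volume.prod volume) = ∫ z, (∫ w, Function.uncurry a (z - w) * Function.uncurry b w
        ∂(volume.prod volume)) * fourierKernel (innerPairing ξ η) z ∂(volume.prod volume) :=
    integral_congr_ae (hconv.mono fun z hz => congrArg (· * _) hz)
  rw [FT2m_eq_integral (hprod.integral_prod_left.congr hconv.symm), FT2m_eq_integral ha,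
    FT2m_eq_integral hb, hconv_mul,
    integral_convolution_mul_fourierKernel (measurable_innerPairing ξ η) ha hb]
  have hc : (((2 * Real.pi) ^ m : ℝ) : ℂ) ≠ 0 := by exact_mod_cast (by positivity)
  field_simp

end FT2m

section Kernel

variable {m : ℕ} {fr : ℝ} {K : Em m → Em m → ℂ} {f : Em m → ℂ}

lemma norm_chirp (x : Em m) : ‖chirp m fr x‖ = 1 := by
  rw [chirp, norm_exp]
  simp [← ofReal_pow]

lemma continuous_chirp : Continuous (chirp m fr) := by
  unfold chirp
  fun_prop

lemma kerF_eq_mul_conj (p q : Em m) :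
    kerF m fr K f p q =
      fr ^ m * (chirp m fr p * cexp (f p)) * K p q * conj (chirp m fr q * cexp (f q)) := by
  rw [kerF, map_mul, ← exp_conj]
  ring

lemma integrable_kerF (hK : Integrable (Function.uncurry K) (volume.prod volume))
    (hf : Measurable f) (hb : ∃ C : ℝ, ∀ x, ‖f x‖ ≤ C) :
    Integrable (Function.uncurry (kerF m fr K f)) (volume.prod volume) := by
  obtain ⟨C, hC⟩ := hb
  set u : Em m → ℂ := fun p => chirp m fr p * cexp (f p)
  have hu_meas : Measurable u := continuous_chirp.measurable.mul hf.cexp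
  have hu_le (p : Em m) : ‖u p‖ ≤ Real.exp C := by
    simpa [u, norm_chirp, norm_exp] using (re_le_norm (f p)).trans (hC p)
  have hint := ((hK.bdd_mul (hu_meas.comp measurable_fst).aestronglyMeasurable
    (ae_of_all _ fun z => hu_le z.1)).mul_bdd
      (continuous_conj.measurable.comp (hu_meas.comp measurable_snd)).aestronglyMeasurable
      (ae_of_all _ fun z => (norm_conj _).trans_le (hu_le z.2))).const_mul ((fr : ℂ) ^ m)
  refine hint.congr (ae_of_all _ fun z => ?_)
  simp only [Function.uncurry, Function.comp_apply, kerF_eq_mul_conj, u]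
  ring

end Kernel

lemma Complex.sq_norm_sub_sq_norm (a b : ℂ) :
    ‖a‖ ^ 2 - ‖b‖ ^ 2 = (conj (a + b) * (a - b)).re := by
  simp only [Complex.sq_norm, normSq_apply, mul_re, sub_re, sub_im, add_re, add_im, conj_re,
    conj_im]
  ring

theorem difference_of_forward_maps_general {m : ℕ} (fr : ℝ)
    (K : Em m → Em m → ℂ)
    (hKcont : Continuous fun pq : Em m × Em m => K pq.1 pq.2)
    (hKsupp : HasCompactSupport fun pq : Em m × Em m => K pq.1 pq.2)
    (f₁ f₂ : Em m → ℂ) (hf₁ : Measurable f₁) (hf₂ : Measurable f₂)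
    (hb₁ : ∃ C : ℝ, ∀ x : Em m, ‖f₁ x‖ ≤ C)
    (hb₂ : ∃ C : ℝ, ∀ x : Em m, ‖f₂ x‖ ≤ C)
    (x y : Em m) :
    FwdF m fr K f₁ x y - FwdF m fr K f₂ x y =
      ((2 * Real.pi) ^ m : ℝ)⁻¹ *
        (FT2m m
          (conv2m m
            (fun z₁ z₂ => (starRingEnd ℂ)
              ((kerF m fr K f₁ (-z₁) (-z₂)) + (kerF m fr K f₂ (-z₁) (-z₂))))
            (fun w₁ w₂ =>
              (kerF m fr K f₁ w₁ w₂) - (kerF m fr K f₂ w₁ w₂)))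
          (fr • x) (-(fr • y))).re := by
  have hK : Integrable (Function.uncurry K) (volume.prod volume) :=
    hKcont.integrable_of_hasCompactSupport hKsupp
  have hk₁ := integrable_kerF (fr := fr) hK hf₁ hb₁
  have hk₂ := integrable_kerF (fr := fr) hK hf₂ hb₂
  have hsum : Integrable (Function.uncurry fun p q => kerF m fr K f₁ p q + kerF m fr K f₂ p q)
      (volume.prod volume) := hk₁.add hk₂
  have hdiff : Integrable (Function.uncurry fun p q => kerF m fr K f₁ p q - kerF m fr K f₂ p q)
      (volume.prod volume) := hk₁.sub hk₂
  rw [FT2m_conv2m (integrable_conj_neg hsum) hdiff, FT2m_conj_neg hsum,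
    FT2m_add hk₁ hk₂, FT2m_sub hk₁ hk₂, mul_assoc, re_ofReal_mul, FwdF, FwdF,
    sq_norm_sub_sq_norm]
  have hc : ((2 * Real.pi) ^ m : ℝ) ≠ 0 := by positivity
  field_simp

/-- Difference of the forward maps as the real part of the Fourier transform of
`conj(K_sum(−·)) ⋆ K_diff`, where `K_sum = K_{f₁} + K_{f₂}` and
`K_diff = K_{f₁} − K_{f₂}`. -/
theorem difference_of_forward_maps {m : ℕ} (hm : 1 ≤ m) (fr : ℝ) (hfr : 0 < fr)
    (K : Em m → Em m → ℂ)
    (hKcont : Continuous fun pq : Em m × Em m => K pq.1 pq.2)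
    (hKsupp : HasCompactSupport fun pq : Em m × Em m => K pq.1 pq.2)
    (f₁ f₂ : Em m → ℂ) (hf₁ : Measurable f₁) (hf₂ : Measurable f₂)
    (hb₁ : ∃ C : ℝ, ∀ x : Em m, ‖f₁ x‖ ≤ C)
    (hb₂ : ∃ C : ℝ, ∀ x : Em m, ‖f₂ x‖ ≤ C)
    (x y : Em m) :
    FwdF m fr K f₁ x y - FwdF m fr K f₂ x y =
      ((2 * Real.pi) ^ m : ℝ)⁻¹ *
        (FT2m m
          (conv2m m
            (fun z₁ z₂ => (starRingEnd ℂ)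
              ((kerF m fr K f₁ (-z₁) (-z₂)) + (kerF m fr K f₂ (-z₁) (-z₂))))
            (fun w₁ w₂ =>
              (kerF m fr K f₁ w₁ w₂) - (kerF m fr K f₂ w₁ w₂)))
          (fr • x) (-(fr • y))).re :=
  difference_of_forward_maps_general fr K hKcont hKsupp f₁ f₂ hf₁ hf₂ hb₁ hb₂ x y

end
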